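/- For every real T > -1/3, setting s := √((T+1)/(3T+1)), the complex identity i·(s+i)² + T·(s+i)³ = -2(2T+1)²·√(T+1)/(3T+1)^{3/2} holds; in particular the left-hand side is a nonpositive real number equal to -F(T)/T² when T ≠ 0. -/

import Mathlib

/-!
Write `w = s + i` with `s` real. The imaginary part of `i w² + T w³` is `s²(3T+1) - (T+1)`, so the
choice `s² = (T+1)/(3T+1)` makes the cubic real, and its real part `s(Ts² - 3T - 2)` then
simplifies to `-2s(2T+1)²/(3T+1)`, visibly `≤ 0`.
-/

open Complex

noncomputable def Ffun (T : ℝ) : ℝ :=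
  2 * T ^ 2 * (2 * T + 1) ^ 2 * Real.sqrt (T + 1) / (3 * T + 1) ^ ((3 : ℝ) / 2)

theorem I_mul_add_I_sq_add_mul_add_I_pow_three_eq_ofReal {s T : ℝ} (h : s ^ 2 * (3 * T + 1) = T + 1) :
    I * (s + I) ^ 2 + (T : ℂ) * (s + I) ^ 3 = ((s * (T * s ^ 2 - 3 * T - 2) : ℝ) : ℂ) := by
  have hC : (s : ℂ) ^ 2 * (3 * T + 1) = T + 1 := by exact_mod_cast h
  push_cast
  linear_combination (2 * s + 3 * T * s + I + T * I : ℂ) * I_sq + I * hC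

theorem Real.rpow_three_halves {x : ℝ} (hx : 0 ≤ x) : x ^ ((3 : ℝ) / 2) = x * √x := by
  rw [show (3 : ℝ) / 2 = 1 + 1 / 2 by norm_num, Real.rpow_add' hx (by norm_num), Real.rpow_one,
    Real.sqrt_eq_rpow]

theorem sqrt_ratio_mul_cubic_eq {T : ℝ} (hT : -(1 : ℝ) / 3 < T) :
    √((T + 1) / (3 * T + 1)) * (T * √((T + 1) / (3 * T + 1)) ^ 2 - 3 * T - 2) =
      -(2 * (2 * T + 1) ^ 2 * √(T + 1) / (3 * T + 1) ^ ((3 : ℝ) / 2)) := by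
  have h3 : 0 < 3 * T + 1 := by linarith
  have h1 : 0 < T + 1 := by linarith
  have hreal : T * ((T + 1) / (3 * T + 1)) - 3 * T - 2 = -2 * (2 * T + 1) ^ 2 / (3 * T + 1) := by
    rw [eq_div_iff h3.ne', sub_mul, sub_mul, mul_assoc, div_mul_cancel₀ _ h3.ne']
    ring
  rw [Real.sq_sqrt (div_nonneg h1.le h3.le), hreal, Real.sqrt_div h1.le,
    Real.rpow_three_halves h3.le, div_mul_div_comm]
  ring

/-- With `s = √((T+1)/(3T+1))`, `i(s+i)² + T(s+i)³ = -2(2T+1)²√(T+1)/(3T+1)^{3/2}`,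
a nonpositive real number, equal to `-F(T)/T²` when `T ≠ 0`. -/
theorem steepest_descent_cubic_identity (T : ℝ) (hT : -(1 : ℝ) / 3 < T)
    (s : ℂ) (hs : s = ((Real.sqrt ((T + 1) / (3 * T + 1)) : ℝ) : ℂ)) :
    Complex.I * (s + Complex.I) ^ 2 + (T : ℂ) * (s + Complex.I) ^ 3 =
      ((-(2 * (2 * T + 1) ^ 2 * Real.sqrt (T + 1) / (3 * T + 1) ^ ((3 : ℝ) / 2)) : ℝ) : ℂ) ∧
    (-(2 * (2 * T + 1) ^ 2 * Real.sqrt (T + 1) / (3 * T + 1) ^ ((3 : ℝ) / 2)) : ℝ) ≤ 0 ∧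
    (T ≠ 0 →
      Complex.I * (s + Complex.I) ^ 2 + (T : ℂ) * (s + Complex.I) ^ 3 =
        ((-Ffun T / T ^ 2 : ℝ) : ℂ)) := by
  have hsq : √((T + 1) / (3 * T + 1)) ^ 2 * (3 * T + 1) = T + 1 := by
    rw [Real.sq_sqrt (div_nonneg (by linarith) (by linarith))]
    exact div_mul_cancel₀ _ (by linarith)
  have hvalue := I_mul_add_I_sq_add_mul_add_I_pow_three_eq_ofReal hsq
  rw [sqrt_ratio_mul_cubic_eq hT, ← hs] at hvalue
  refine ⟨hvalue, neg_nonpos.mpr ?_, fun hT0 => ?_⟩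
  · have h3 : 0 < 3 * T + 1 := by linarith
    positivity
  · rw [hvalue, Ffun]
    congr 1
    field_simp
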